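/- arXiv:2204.08921 — 7 statements merged into one kernel-verified Lean document; each statement's English description precedes it below -/
import Mathlib

section
/- Let e_i, e_j, e_k ∈ {0,1} and let τ_i, τ_j, τ_k be unit vectors in ℝ² such that for each ordered pair (a,b) ∈ {(i,j), (j,k), (k,i)} one has ⟨τ_a, τ_b⟩ = −(1/2)·(−1)^{e_a+e_b} and ⟨τ_a, Rτ_b⟩ = −(√3/2)·(−1)^{e_a+e_b}. Suppose real numbers N_i, N_j, N_k, T_i, T_j, T_k satisfy N_i·Rτ_i + T_i·τ_i = N_j·Rτ_j + T_j·τ_j = N_k·Rτ_k + T_k·τ_k. Then (−1)^{e_i}N_i + (−1)^{e_j}N_j + (−1)^{e_k}N_k = 0, and moreover T_i = −(1/√3)N_i − (2/√3)(−1)^{e_i+e_j}N_j, T_j = (2/√3)(−1)^{e_i+e_j}N_i + (1/√3)N_j, and T_k = −(1/√3)(−1)^{e_i+e_k}N_i + (1/√3)(−1)^{e_j+e_k}N_j. -/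
open scoped RealInnerProductSpace

/-- The point of `ℝ²` (as `EuclideanSpace ℝ (Fin 2)`) with coordinates `a`, `b`. -/
noncomputable def vec2 (a b : ℝ) : EuclideanSpace ℝ (Fin 2) :=
  (WithLp.equiv 2 (Fin 2 → ℝ)).symm ![a, b]

/-- Counterclockwise rotation by `π/2` in `ℝ²`: `R(a,b) = (−b,a)`. -/
noncomputable def Rot (v : EuclideanSpace ℝ (Fin 2)) : EuclideanSpace ℝ (Fin 2) :=
  vec2 (-(v 1)) (v 0)

lemma inner_expand' (u v : EuclideanSpace ℝ (Fin 2)) : ⟪u,v⟫ = u 0 * v 0 + u 1 * v 1 := by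
  simp [PiLp.inner_apply, Fin.sum_univ_two, mul_comm]

lemma rot0' (v : EuclideanSpace ℝ (Fin 2)) : Rot v 0 = -(v 1) := rfl
lemma rot1' (v : EuclideanSpace ℝ (Fin 2)) : Rot v 1 = v 0 := rfl

lemma inner_rot_rot' (u v : EuclideanSpace ℝ (Fin 2)) : ⟪Rot u, Rot v⟫ = ⟪u,v⟫ := by
  rw [inner_expand', inner_expand', rot0', rot0', rot1', rot1']; ring

lemma inner_rot_left' (u v : EuclideanSpace ℝ (Fin 2)) : ⟪Rot u, v⟫ = -⟪u, Rot v⟫ := by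
  rw [inner_expand', inner_expand', rot0', rot1', rot0', rot1']; ring

lemma inner_rot_self' (u : EuclideanSpace ℝ (Fin 2)) : ⟪u, Rot u⟫ = 0 := by
  rw [inner_expand', rot0', rot1']; ring

lemma neg_one_pow_mul_self (n : ℕ) : (-1 : ℝ) ^ n * (-1) ^ n = 1 := by
  rw [← pow_add, ← two_mul, pow_mul]; norm_num

/-- **Necessary junction relations** (Lemma `lem:BoundaryRelationsTN`): if three curves written as
normal–tangential graphs over the curves of a regular network meet at a common triple junction,
then the normal components sum to zero (with signs) and the tangential components are determined
linearly by the normal ones. -/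
theorem stmt0
    (ei ej ek : ℕ)
    (hei : ei ∈ ({0, 1} : Set ℕ)) (hej : ej ∈ ({0, 1} : Set ℕ)) (hek : ek ∈ ({0, 1} : Set ℕ))
    (τi τj τk : EuclideanSpace ℝ (Fin 2))
    (hτi : ‖τi‖ = 1) (hτj : ‖τj‖ = 1) (hτk : ‖τk‖ = 1)
    (hij : ⟪τi, τj⟫ = -(1/2) * (-1 : ℝ) ^ (ei + ej))
    (hjk : ⟪τj, τk⟫ = -(1/2) * (-1 : ℝ) ^ (ej + ek))
    (hki : ⟪τk, τi⟫ = -(1/2) * (-1 : ℝ) ^ (ek + ei))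
    (hij' : ⟪τi, Rot τj⟫ = -(Real.sqrt 3 / 2) * (-1 : ℝ) ^ (ei + ej))
    (hjk' : ⟪τj, Rot τk⟫ = -(Real.sqrt 3 / 2) * (-1 : ℝ) ^ (ej + ek))
    (hki' : ⟪τk, Rot τi⟫ = -(Real.sqrt 3 / 2) * (-1 : ℝ) ^ (ek + ei))
    (Ni Nj Nk Ti Tj Tk : ℝ)
    (h1 : Ni • Rot τi + Ti • τi = Nj • Rot τj + Tj • τj)
    (h2 : Nj • Rot τj + Tj • τj = Nk • Rot τk + Tk • τk) :
    (-1 : ℝ) ^ ei * Ni + (-1 : ℝ) ^ ej * Nj + (-1 : ℝ) ^ ek * Nk = 0 ∧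
    Ti = -(1 / Real.sqrt 3) * Ni - (2 / Real.sqrt 3) * (-1 : ℝ) ^ (ei + ej) * Nj ∧
    Tj = (2 / Real.sqrt 3) * (-1 : ℝ) ^ (ei + ej) * Ni + (1 / Real.sqrt 3) * Nj ∧
    Tk = -(1 / Real.sqrt 3) * (-1 : ℝ) ^ (ei + ek) * Ni
          + (1 / Real.sqrt 3) * (-1 : ℝ) ^ (ej + ek) * Nj := by
  simp only [pow_add] at hij hjk hki hij' hjk' hki' ⊢
  set a : ℝ := Real.sqrt 3 with hadef
  set x : ℝ := (-1 : ℝ) ^ ei with hxdef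
  set y : ℝ := (-1 : ℝ) ^ ej with hydef
  set z : ℝ := (-1 : ℝ) ^ ek with hzdef
  have hx : x * x = 1 := neg_one_pow_mul_self ei
  have hy : y * y = 1 := neg_one_pow_mul_self ej
  have hz : z * z = 1 := neg_one_pow_mul_self ek
  have ha : a * a = 3 := Real.mul_self_sqrt (by norm_num)
  have ha0 : a ≠ 0 := by
    intro h; rw [h] at ha; norm_num at ha
  -- inner product values
  have vii : ⟪τi, τi⟫ = 1 := by
    rw [real_inner_self_eq_norm_sq, hτi]; norm_num
  have vjj : ⟪τj, τj⟫ = 1 := by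
    rw [real_inner_self_eq_norm_sq, hτj]; norm_num
  have vkk : ⟪τk, τk⟫ = 1 := by
    rw [real_inner_self_eq_norm_sq, hτk]; norm_num
  have vRii : ⟪Rot τi, τi⟫ = 0 := by rw [real_inner_comm, inner_rot_self']
  have vRjj : ⟪Rot τj, τj⟫ = 0 := by rw [real_inner_comm, inner_rot_self']
  have vRkk : ⟪Rot τk, τk⟫ = 0 := by rw [real_inner_comm, inner_rot_self']
  have vji : ⟪τj, τi⟫ = -(1/2) * (x * y) := by rw [real_inner_comm, hij]
  have vRji : ⟪Rot τj, τi⟫ = -(a/2) * (x * y) := by rw [real_inner_comm, hij']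
  have vRij : ⟪Rot τi, τj⟫ = (a/2) * (x * y) := by
    rw [inner_rot_left', hij']; ring
  have vRjk : ⟪Rot τj, τk⟫ = (a/2) * (y * z) := by
    rw [inner_rot_left', hjk']; ring
  have vRRjk : ⟪Rot τj, Rot τk⟫ = -(1/2) * (y * z) := by
    rw [inner_rot_rot', hjk]
  have vRRkk : ⟪Rot τk, Rot τk⟫ = 1 := by rw [inner_rot_rot', vkk]
  have vkRk : ⟪τk, Rot τk⟫ = 0 := inner_rot_self' τk
  -- scalar equations
  have e1 : Ti = -(a/2) * (x*y) * Nj - (1/2) * (x*y) * Tj := by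
    have h := congrArg (fun w => (⟪w, τi⟫ : ℝ)) h1
    simp only [inner_add_left, real_inner_smul_left] at h
    rw [vRii, vii, vRji, vji] at h
    linear_combination h
  have e2 : Tj = (a/2) * (x*y) * Ni - (1/2) * (x*y) * Ti := by
    have h := congrArg (fun w => (⟪w, τj⟫ : ℝ)) h1
    simp only [inner_add_left, real_inner_smul_left] at h
    rw [vRij, hij, vRjj, vjj] at h
    linear_combination -h
  have e4 : Tk = (a/2) * (y*z) * Nj - (1/2) * (y*z) * Tj := by
    have h := congrArg (fun w => (⟪w, τk⟫ : ℝ)) h2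
    simp only [inner_add_left, real_inner_smul_left] at h
    rw [vRjk, hjk, vRkk, vkk] at h
    linear_combination -h
  have e5 : Nk = -(1/2) * (y*z) * Nj - (a/2) * (y*z) * Tj := by
    have h := congrArg (fun w => (⟪w, Rot τk⟫ : ℝ)) h2
    simp only [inner_add_left, real_inner_smul_left] at h
    rw [vRRjk, hjk', vRRkk, vkRk] at h
    linear_combination -h
  -- solve the linear system
  have hTi3 : 3 * Ti = -a * Ni - 2 * a * (x*y) * Nj := by
    linear_combination 4 * e1 - 2 * (x*y) * e2 + (Ti - a * Ni) * (x * x * hy + hx)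
  have hTj3 : 3 * Tj = 2 * a * (x*y) * Ni + a * Nj := by
    linear_combination 3 * e2 - (1/2) * (x*y) * hTi3 + a * Nj * (x * x * hy + hx)
  have hTk3 : 3 * Tk = -(a * (x*z)) * Ni + a * (y*z) * Nj := by
    linear_combination 3 * e4 - (1/2) * (y*z) * hTj3 - a * Ni * x * z * hy
  have hNk : Nk = -(x*z) * Ni - (y*z) * Nj := by
    linear_combination e5 - (a/6) * (y*z) * hTj3 - Ni * (x*z) * hy
      - (Ni * (x*z) * y * y / 3) * ha - ((y*z) * Nj / 6) * ha
  have hinv1 : (1:ℝ) / a = a / 3 := by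
    rw [div_eq_div_iff ha0 (by norm_num)]; linarith
  have hinv2 : (2:ℝ) / a = 2 * a / 3 := by
    rw [div_eq_div_iff ha0 (by norm_num)]; linarith
  refine ⟨?_, ?_, ?_, ?_⟩
  · linear_combination z * hNk - (x * Ni + y * Nj) * hz
  · rw [hinv1, hinv2]; linear_combination (1/3) * hTi3
  · rw [hinv1, hinv2]; linear_combination (1/3) * hTj3
  · rw [hinv1]; linear_combination (1/3) * hTk3
end

section
/- Quantitative implicit function theorem: Let n, m ≥ 1, let (x₀,y₀) ∈ ℝⁿ × ℝᵐ, let U ⊆ ℝⁿ × ℝᵐ be an open neighborhood of (x₀,y₀), and let F : U → ℝᵐ be continuously differentiable with F(x₀,y₀) = 0. Assume: (i) the partial Fréchet derivative D_yF(x₀,y₀) : ℝᵐ → ℝᵐ is invertible, and set S := ‖(D_yF(x₀,y₀))⁻¹‖; (ii) ρ > 0 is such that the closed set B̄(x₀,ρ) × B̄(y₀,ρ) is contained in U and ‖Id − (D_yF(x₀,y₀))⁻¹ ∘ D_yF(x,y)‖ ≤ 1/2 for all (x,y) ∈ B(x₀,ρ) × B(y₀,ρ); (iii) N := sup{‖D_xF(x,y)‖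 : (x,y) ∈ B(x₀,ρ) × B(y₀,ρ)} is finite and positive. Then, setting r := min{ρ/(2SN), ρ/2}, there exists a unique function f : B(x₀,r) → B̄(y₀,ρ) such that f(x₀) = y₀ and, for every x ∈ B(x₀,r) and every y ∈ B̄(y₀,ρ), F(x,y) = 0 if and only if y = f(x). -/
/-!
For fixed `x`, the zeros of `F (x, ·)` in `B̄(y₀, ρ)` are the fixed points of the Newton-type map
`Φₓ y = y - A⁻¹ F (x, y)`. The bound on `id - A⁻¹ ∘ D_yF` and the mean value inequality make `Φₓ`
a `1/2`-contraction of `B(y₀, ρ)`, hence by continuity of `B̄(y₀, ρ)`. Since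
`‖Φₓ y₀ - y₀‖ ≤ S ‖F (x, y₀)‖ ≤ S N ‖x - x₀‖ ≤ S N r ≤ ρ / 2`, `Φₓ` maps `B̄(y₀, ρ)` into itself,
and Banach's fixed point theorem gives exactly one zero `f x`.
-/

open Metric Set
open scoped NNReal

theorem LipschitzOnWith.existsUnique_fixedPoint_mem_closedBall {X : Type*} [MetricSpace X]
    [CompleteSpace X] {Φ : X → X} {K : ℝ≥0} {c : X} {ρ : ℝ} (hK : K < 1)
    (hΦ : LipschitzOnWith K Φ (closedBall c ρ)) (hc : dist (Φ c) c ≤ (1 - K) * ρ) :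
    ∃! y, y ∈ closedBall c ρ ∧ Φ y = y := by
  have hK' : (K : ℝ) < 1 := hK
  have hρ : 0 ≤ ρ := nonneg_of_mul_nonneg_right ((dist_nonneg).trans hc) (by linarith)
  have hc_mem : c ∈ closedBall c ρ := mem_closedBall_self hρ
  have hmaps : MapsTo Φ (closedBall c ρ) (closedBall c ρ) := fun y hy => by
    calc dist (Φ y) c ≤ dist (Φ y) (Φ c) + dist (Φ c) c := dist_triangle _ _ _
      _ ≤ K * ρ + (1 - K) * ρ := by
        gcongr
        exact (hΦ.dist_le_mul y hy c hc_mem).trans (by gcongr; exact hy)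
      _ = ρ := by ring
  obtain ⟨y, hy, hfix, -⟩ := ContractingWith.exists_fixedPoint' isClosed_closedBall.isComplete
    hmaps ⟨hK, hΦ.mapsToRestrict hmaps⟩ hc_mem (edist_ne_top _ _)
  refine ⟨y, ⟨hy, hfix⟩, fun z ⟨hz, hzfix⟩ => dist_le_zero.1 ?_⟩
  have hcontract := hΦ.dist_le_mul z hz y hy
  rw [hzfix, hfix] at hcontract
  nlinarith [dist_nonneg (x := z) (y := y)]

section Newton

variable {G : Type*} [NormedAddCommGroup G] [NormedSpace ℝ G] [CompleteSpace G]

theorem existsUnique_zero_mem_closedBall_of_norm_id_sub_comp_fderiv_le {g : G → G} {A : G ≃L[ℝ] G}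
    {y₀ : G} {ρ : ℝ} {K : ℝ≥0} (hK : K < 1) (hρ : 0 < ρ)
    (hcont : ContinuousOn g (closedBall y₀ ρ)) (hdiff : ∀ y ∈ ball y₀ ρ, DifferentiableAt ℝ g y)
    (hderiv : ∀ y ∈ ball y₀ ρ,
      ‖ContinuousLinearMap.id ℝ G - (A.symm : G →L[ℝ] G).comp (fderiv ℝ g y)‖ ≤ K)
    (hy₀ : ‖A.symm (g y₀)‖ ≤ (1 - K) * ρ) :
    ∃! y, y ∈ closedBall y₀ ρ ∧ g y = 0 := by
  set Φ : G → G := fun y => y - A.symm (g y)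
  have hΦ : ∀ y ∈ ball y₀ ρ,
      HasFDerivAt Φ (ContinuousLinearMap.id ℝ G - (A.symm : G →L[ℝ] G).comp (fderiv ℝ g y)) y :=
    fun y hy => (hasFDerivAt_id y).sub (A.symm.hasFDerivAt.comp y (hdiff y hy).hasFDerivAt)
  have hlip : LipschitzOnWith K Φ (ball y₀ ρ) :=
    (convex_ball y₀ ρ).lipschitzOnWith_of_nnnorm_hasFDerivWithin_le
      (fun y hy => (hΦ y hy).hasFDerivWithinAt)
      (fun y hy => by rw [← NNReal.coe_le_coe, coe_nnnorm]; exact hderiv y hy)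
  have hΦcont : ContinuousOn Φ (closure (ball y₀ ρ)) := by
    rw [closure_ball y₀ hρ.ne']
    exact continuousOn_id.sub (A.symm.continuous.comp_continuousOn hcont)
  have hfix_iff : ∀ y, Φ y = y ↔ g y = 0 := fun y => by simp [Φ]
  have hlip' := hlip.closure hΦcont
  rw [closure_ball y₀ hρ.ne'] at hlip'
  simpa only [hfix_iff] using
    hlip'.existsUnique_fixedPoint_mem_closedBall hK (by simpa [Φ, dist_eq_norm] using hy₀)

end Newton

section PartialDerivative

variable {E G H : Type*} [NormedAddCommGroup E] [NormedSpace ℝ E] [NormedAddCommGroup G]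
  [NormedSpace ℝ G] [NormedAddCommGroup H] [NormedSpace ℝ H]

theorem norm_fderiv_prodMk_left_le {F : E × G → H} {x : E} {y : G}
    (hF : DifferentiableAt ℝ F (x, y)) :
    ‖fderiv ℝ (fun x' => F (x', y)) x‖ ≤ ‖fderiv ℝ F (x, y)‖ := by
  have hpartial : HasFDerivAt (fun x' => F (x', y))
      ((fderiv ℝ F (x, y)).comp (ContinuousLinearMap.inl ℝ E G)) x :=
    hF.hasFDerivAt.comp x (hasFDerivAt_prodMk_left x y)
  rw [hpartial.fderiv]
  exact (ContinuousLinearMap.opNorm_comp_le _ _).trans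
    (mul_le_of_le_one_right (norm_nonneg _) (ContinuousLinearMap.norm_inl_le_one ℝ E G))

theorem bddAbove_norm_fderiv_prodMk_left {F : E × G → H} {U K : Set (E × G)} {s : Set E}
    {t : Set G} (hU : IsOpen U) (hF : ContDiffOn ℝ 1 F U) (hK : IsCompact K) (hKU : K ⊆ U)
    (hst : s ×ˢ t ⊆ K) :
    BddAbove {c : ℝ | ∃ x ∈ s, ∃ y ∈ t, c = ‖fderiv ℝ (fun x' => F (x', y)) x‖} := by
  obtain ⟨M, hM⟩ :=
    hK.exists_bound_of_continuousOn ((hF.continuousOn_fderiv_of_isOpen hU le_rfl).mono hKU)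
  refine ⟨M, ?_⟩
  rintro _ ⟨x, hx, y, hy, rfl⟩
  have hxy : (x, y) ∈ U := hKU (hst ⟨hx, hy⟩)
  exact (norm_fderiv_prodMk_left_le
    ((hF.contDiffAt (hU.mem_nhds hxy)).differentiableAt one_ne_zero)).trans (hM _ (hst ⟨hx, hy⟩))

theorem Convex.norm_sub_le_of_norm_fderiv_prodMk_left_le {F : E × G → H} {s : Set E} {y : G}
    {N : ℝ} {x x₀ : E} (hs : Convex ℝ s) (hF : ∀ x ∈ s, DifferentiableAt ℝ F (x, y))
    (hN : ∀ x ∈ s, ‖fderiv ℝ (fun x' => F (x', y)) x‖ ≤ N) (hx : x ∈ s) (hx₀ : x₀ ∈ s) :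
    ‖F (x, y) - F (x₀, y)‖ ≤ N * ‖x - x₀‖ :=
  hs.norm_image_sub_le_of_norm_fderiv_le (f := fun x' => F (x', y))
    (fun x' hx' => (hF x' hx').comp x' (hasFDerivAt_prodMk_left (𝕜 := ℝ) x' y).differentiableAt)
    hN hx₀ hx

end PartialDerivative

section Slice

variable {E G : Type*} [NormedAddCommGroup E] [NormedSpace ℝ E] [NormedAddCommGroup G]
  [NormedSpace ℝ G] [CompleteSpace G]

theorem existsUnique_zero_mem_closedBall_of_prodMk {F : E × G → G} {A : G ≃L[ℝ] G} {x₀ x : E}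
    {y₀ : G} {ρ N : ℝ} {K : ℝ≥0} (hK : K < 1) (hρ : 0 < ρ)
    (hcont : ContinuousOn F (closedBall x₀ ρ ×ˢ closedBall y₀ ρ))
    (hdiff : ∀ p ∈ closedBall x₀ ρ ×ˢ closedBall y₀ ρ, DifferentiableAt ℝ F p)
    (hderiv : ∀ y ∈ ball y₀ ρ, ‖ContinuousLinearMap.id ℝ G -
      (A.symm : G →L[ℝ] G).comp (fderiv ℝ (fun y' => F (x, y')) y)‖ ≤ K)
    (hN : ∀ x' ∈ ball x₀ ρ, ‖fderiv ℝ (fun x'' => F (x'', y₀)) x'‖ ≤ N)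
    (hF0 : F (x₀, y₀) = 0) (hx : x ∈ ball x₀ ρ)
    (hsmall : ‖(A.symm : G →L[ℝ] G)‖ * (N * ‖x - x₀‖) ≤ (1 - K) * ρ) :
    ∃! y, y ∈ closedBall y₀ ρ ∧ F (x, y) = 0 := by
  have hxc : x ∈ closedBall x₀ ρ := ball_subset_closedBall hx
  have hFx : ‖F (x, y₀)‖ ≤ N * ‖x - x₀‖ := by
    simpa [hF0] using (convex_ball x₀ ρ).norm_sub_le_of_norm_fderiv_prodMk_left_le
      (fun x' hx' => hdiff _ ⟨ball_subset_closedBall hx', mem_closedBall_self hρ.le⟩)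
      hN hx (mem_ball_self hρ)
  refine existsUnique_zero_mem_closedBall_of_norm_id_sub_comp_fderiv_le hK hρ
    (hcont.comp (Continuous.prodMk_right x).continuousOn fun y hy => ⟨hxc, hy⟩)
    (fun y hy => (hdiff (x, y) ⟨hxc, ball_subset_closedBall hy⟩).comp y
      (hasFDerivAt_prodMk_right (𝕜 := ℝ) x y).differentiableAt)
    hderiv (le_trans ?_ hsmall)
  exact (A.symm : G →L[ℝ] G).le_opNorm_of_le hFx

end Slice

theorem exists_eqOn_of_existsUnique {α β : Type*} {P : α → β → Prop} {s : Set α} {t : Set β}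
    {a : α} {b : β} (hb : b ∈ t) (hab : P a b) (h : ∀ x ∈ s, ∃! y, y ∈ t ∧ P x y) :
    ∃ f : α → β, (f a = b ∧ (∀ x ∈ s, f x ∈ t) ∧ ∀ x ∈ s, ∀ y ∈ t, (P x y ↔ y = f x)) ∧
      ∀ g : α → β, (g a = b ∧ (∀ x ∈ s, g x ∈ t) ∧ ∀ x ∈ s, ∀ y ∈ t, (P x y ↔ y = g x)) →
        ∀ x ∈ s, g x = f x := by
  classical
  have : Nonempty β := ⟨b⟩
  choose! f hf huniq using h
  -- `a` need not lie in `s`, so `f a = b` must be forced by hand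
  refine ⟨s.piecewise f fun _ => b, ⟨?_, fun x hx => ?_, fun x hx y hy => ?_⟩, ?_⟩
  · by_cases ha : a ∈ s
    · simpa [ha] using (huniq a ha b ⟨hb, hab⟩).symm
    · simp [ha]
  · simpa [hx] using (hf x hx).1
  · simp only [piecewise_eq_of_mem _ _ _ hx]
    exact ⟨fun hP => huniq x hx y ⟨hy, hP⟩, fun hyf => hyf ▸ (hf x hx).2⟩
  · rintro g ⟨-, hgt, hgP⟩ x hx
    rw [piecewise_eq_of_mem _ _ _ hx]
    exact huniq x hx (g x) ⟨hgt x hx, (hgP x hx (g x) (hgt x hx)).2 rfl⟩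


theorem stmt2_general (n m : ℕ)
    (x₀ : EuclideanSpace ℝ (Fin n)) (y₀ : EuclideanSpace ℝ (Fin m))
    (U : Set (EuclideanSpace ℝ (Fin n) × EuclideanSpace ℝ (Fin m)))
    (hU : IsOpen U)
    (F : EuclideanSpace ℝ (Fin n) × EuclideanSpace ℝ (Fin m) → EuclideanSpace ℝ (Fin m))
    (hF : ContDiffOn ℝ 1 F U) (hF0 : F (x₀, y₀) = 0)
    -- (i) invertibility of the partial derivative in `y` at `(x₀, y₀)`, and `S` its inverse norm
    (A : EuclideanSpace ℝ (Fin m) ≃L[ℝ] EuclideanSpace ℝ (Fin m))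
    (S : ℝ)
    (hS : S = ‖(A.symm : EuclideanSpace ℝ (Fin m) →L[ℝ] EuclideanSpace ℝ (Fin m))‖)
    -- (ii) the quantitative contraction bound on the product of balls of radius `ρ`
    (ρ : ℝ) (hρ : 0 < ρ)
    (hsub : closedBall x₀ ρ ×ˢ closedBall y₀ ρ ⊆ U)
    (hhalf : ∀ x ∈ ball x₀ ρ, ∀ y ∈ ball y₀ ρ,
      ‖ContinuousLinearMap.id ℝ (EuclideanSpace ℝ (Fin m)) -
        (A.symm : EuclideanSpace ℝ (Fin m) →L[ℝ] EuclideanSpace ℝ (Fin m)).comp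
          (fderiv ℝ (fun y' => F (x, y')) y)‖ ≤ 1 / 2)
    -- (iii) `N` is the (finite, positive) supremum of `‖D_xF‖` on the product of balls
    (N : ℝ)
    (hN : N = sSup {c : ℝ | ∃ x ∈ ball x₀ ρ, ∃ y ∈ ball y₀ ρ,
      c = ‖fderiv ℝ (fun x' => F (x', y)) x‖})
    -- the radius of the domain of the implicit function
    (r : ℝ) (hr : r = min (ρ / (2 * S * N)) (ρ / 2)) :
    ∃ f : EuclideanSpace ℝ (Fin n) → EuclideanSpace ℝ (Fin m),
      (f x₀ = y₀ ∧ (∀ x ∈ ball x₀ r, f x ∈ closedBall y₀ ρ) ∧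
        ∀ x ∈ ball x₀ r, ∀ y ∈ closedBall y₀ ρ, (F (x, y) = 0 ↔ y = f x)) ∧
      ∀ g : EuclideanSpace ℝ (Fin n) → EuclideanSpace ℝ (Fin m),
        (g x₀ = y₀ ∧ (∀ x ∈ ball x₀ r, g x ∈ closedBall y₀ ρ) ∧
          ∀ x ∈ ball x₀ r, ∀ y ∈ closedBall y₀ ρ, (F (x, y) = 0 ↔ y = g x)) →
        ∀ x ∈ ball x₀ r, g x = f x := by
  have hdiff : ∀ p ∈ closedBall x₀ ρ ×ˢ closedBall y₀ ρ, DifferentiableAt ℝ F p := fun p hp =>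
    (hF.contDiffAt (hU.mem_nhds (hsub hp))).differentiableAt one_ne_zero
  have hNbound : ∀ x ∈ ball x₀ ρ, ∀ y ∈ ball y₀ ρ, ‖fderiv ℝ (fun x' => F (x', y)) x‖ ≤ N :=
    fun x hx y hy => by
      rw [hN]
      exact le_csSup (bddAbove_norm_fderiv_prodMk_left hU hF
        ((isCompact_closedBall _ _).prod (isCompact_closedBall _ _)) hsub
        (prod_mono ball_subset_closedBall ball_subset_closedBall)) ⟨x, hx, y, hy, rfl⟩
  have hS0 : 0 ≤ S := hS ▸ norm_nonneg _
  have hN0 : 0 ≤ N := hN ▸ Real.sSup_nonneg (by rintro _ ⟨x, -, y, -, rfl⟩; exact norm_nonneg _)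
  refine exists_eqOn_of_existsUnique (mem_closedBall_self hρ.le) hF0 fun x hx => ?_
  have hxρ : x ∈ ball x₀ ρ :=
    ball_subset_ball ((hr ▸ min_le_right _ _).trans (half_le_self hρ.le)) hx
  refine existsUnique_zero_mem_closedBall_of_prodMk (K := 1 / 2) (by norm_num) hρ
    (hF.continuousOn.mono hsub) hdiff (fun y hy => by simpa using hhalf x hxρ y hy)
    (fun x' hx' => hNbound x' hx' y₀ (mem_ball_self hρ)) hF0 hxρ ?_
  have hrSN : r * (2 * S * N) ≤ ρ :=
    mul_le_of_le_div₀ hρ.le (by positivity) (hr ▸ min_le_left _ _)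
  have hxr : ‖x - x₀‖ ≤ r := (mem_ball_iff_norm.1 hx).le
  rw [← hS]
  norm_num
  nlinarith [mul_nonneg hS0 hN0]

/-- **Quantitative implicit function theorem** (Theorem `thm:ImplicitFunction`): the radius of
the domain of the implicit function depends only on `ρ`, `S = ‖(D_yF(x₀,y₀))⁻¹‖` and the bound
`N` on `‖D_xF‖`. -/
theorem stmt2 (n m : ℕ) (hn : 1 ≤ n) (hm : 1 ≤ m)
    (x₀ : EuclideanSpace ℝ (Fin n)) (y₀ : EuclideanSpace ℝ (Fin m))
    (U : Set (EuclideanSpace ℝ (Fin n) × EuclideanSpace ℝ (Fin m)))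
    (hU : IsOpen U) (hmem : (x₀, y₀) ∈ U)
    (F : EuclideanSpace ℝ (Fin n) × EuclideanSpace ℝ (Fin m) → EuclideanSpace ℝ (Fin m))
    (hF : ContDiffOn ℝ 1 F U) (hF0 : F (x₀, y₀) = 0)
    -- (i) invertibility of the partial derivative in `y` at `(x₀, y₀)`, and `S` its inverse norm
    (A : EuclideanSpace ℝ (Fin m) ≃L[ℝ] EuclideanSpace ℝ (Fin m))
    (hA : (A : EuclideanSpace ℝ (Fin m) →L[ℝ] EuclideanSpace ℝ (Fin m))
        = fderiv ℝ (fun y => F (x₀, y)) y₀)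
    (S : ℝ)
    (hS : S = ‖(A.symm : EuclideanSpace ℝ (Fin m) →L[ℝ] EuclideanSpace ℝ (Fin m))‖)
    -- (ii) the quantitative contraction bound on the product of balls of radius `ρ`
    (ρ : ℝ) (hρ : 0 < ρ)
    (hsub : closedBall x₀ ρ ×ˢ closedBall y₀ ρ ⊆ U)
    (hhalf : ∀ x ∈ ball x₀ ρ, ∀ y ∈ ball y₀ ρ,
      ‖ContinuousLinearMap.id ℝ (EuclideanSpace ℝ (Fin m)) -
        (A.symm : EuclideanSpace ℝ (Fin m) →L[ℝ] EuclideanSpace ℝ (Fin m)).comp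
          (fderiv ℝ (fun y' => F (x, y')) y)‖ ≤ 1 / 2)
    -- (iii) `N` is the (finite, positive) supremum of `‖D_xF‖` on the product of balls
    (N : ℝ) (hNpos : 0 < N)
    (hN : N = sSup {c : ℝ | ∃ x ∈ ball x₀ ρ, ∃ y ∈ ball y₀ ρ,
      c = ‖fderiv ℝ (fun x' => F (x', y)) x‖})
    -- the radius of the domain of the implicit function
    (r : ℝ) (hr : r = min (ρ / (2 * S * N)) (ρ / 2)) :
    ∃ f : EuclideanSpace ℝ (Fin n) → EuclideanSpace ℝ (Fin m),
      (f x₀ = y₀ ∧ (∀ x ∈ ball x₀ r, f x ∈ closedBall y₀ ρ) ∧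
        ∀ x ∈ ball x₀ r, ∀ y ∈ closedBall y₀ ρ, (F (x, y) = 0 ↔ y = f x)) ∧
      ∀ g : EuclideanSpace ℝ (Fin n) → EuclideanSpace ℝ (Fin m),
        (g x₀ = y₀ ∧ (∀ x ∈ ball x₀ r, g x ∈ closedBall y₀ ρ) ∧
          ∀ x ∈ ball x₀ r, ∀ y ∈ closedBall y₀ ρ, (F (x, y) = 0 ↔ y = g x)) →
        ∀ x ∈ ball x₀ r, g x = f x :=
  stmt2_general n m x₀ y₀ U hU F hF hF0 A S hS ρ hρ hsub hhalf N hN r hr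
end

section
/- First variation of length at a regular triple junction: Let γ¹, γ², γ³ : [0,1] → ℝ² be C² maps with (γⁱ)'(x) ≠ 0 for all x, meeting at a common junction point γ¹(0) = γ²(0) = γ³(0), and suppose the junction is regular, i.e. τ¹(0) + τ²(0) + τ³(0) = 0, where τⁱ = (γⁱ)'/‖(γⁱ)'‖. Let Y¹, Y², Y³ : [0,1] → ℝ² be C¹ maps with Y¹(0) = Y²(0) = Y³(0) and Yⁱ(1) = 0 for i = 1, 2, 3. Then the total length ε ↦ Σ_{i=1}^{3} ∫₀¹ ‖(γⁱ)'(x) + ε(Yⁱ)'(x)‖ dx is differentiable at ε = 0 with derivative equal to −Σ_{i=1}^{3} ∫₀¹ ⟨(τⁱ)'(x), Yⁱ(x)⟩ dx; that is, the boundary terms at the junction cancel and the first variation equals minus the sum of the integrals of ⟨kⁱ, Yⁱ⟩ against arclength, where kⁱ is the curvature vector of γⁱ. -/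
open scoped RealInnerProductSpace

/-- The unit tangent vector `τ = γ'/‖γ'‖` of a curve `γ`. -/
noncomputable def tangent (γ : ℝ → EuclideanSpace ℝ (Fin 2)) (x : ℝ) :
    EuclideanSpace ℝ (Fin 2) :=
  ‖deriv γ x‖⁻¹ • deriv γ x

/-!
The first variation of the length of one curve is `∫ ⟪τ, Y'⟫`, by differentiating under the
integral sign (the integrand is `‖Y'‖`-Lipschitz in `ε`). Integrating by parts turns it into
`⟪τ, Y⟫|₀¹ - ∫ ⟪τ', Y⟫`. Summing over the three curves, the terms at `x = 1` vanish since the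
`Yⁱ` fix the outer endpoints, and those at the junction add up to `⟪τ¹ + τ² + τ³, Y(0)⟫ = 0`.
-/

open MeasureTheory Set

section InnerProductSpace

variable {E : Type*} [NormedAddCommGroup E] [InnerProductSpace ℝ E]

theorem HasDerivAt.norm_of_ne_zero {f : ℝ → E} {f' : E} {x : ℝ} (hf : HasDerivAt f f' x)
    (hx : f x ≠ 0) : HasDerivAt (fun t => ‖f t‖) ⟪‖f x‖⁻¹ • f x, f'⟫ x := by
  have hsqrt := hf.norm_sq.sqrt (by simpa using hx)
  simp only [Real.sqrt_sq (norm_nonneg _)] at hsqrt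
  convert hsqrt using 1
  rw [real_inner_smul_left]
  field_simp

theorem hasDerivAt_norm_add_smul (v w : E) (hv : v ≠ 0) :
    HasDerivAt (fun ε : ℝ => ‖v + ε • w‖) ⟪‖v‖⁻¹ • v, w⟫ 0 := by
  have hline : HasDerivAt (fun ε : ℝ => v + ε • w) w 0 := by
    simpa using ((hasDerivAt_id (0 : ℝ)).smul_const w).const_add v
  simpa using hline.norm_of_ne_zero (by simpa using hv)

theorem lipschitzWith_norm_add_smul (v w : E) :
    LipschitzWith ‖w‖₊ (fun ε : ℝ => ‖v + ε • w‖) :=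
  LipschitzWith.of_dist_le_mul fun s t => by
    calc dist ‖v + s • w‖ ‖v + t • w‖ ≤ ‖(v + s • w) - (v + t • w)‖ := abs_norm_sub_norm_le _ _
      _ = ‖w‖ * dist s t := by
        rw [add_sub_add_left_eq_sub, ← sub_smul, norm_smul, Real.dist_eq, Real.norm_eq_abs,
          mul_comm]

theorem hasDerivAt_intervalIntegral_norm_add_smul {f g : ℝ → E} {a b : ℝ}
    (hf : Continuous f) (hg : Continuous g) (hf0 : ∀ x ∈ uIcc a b, f x ≠ 0) :
    HasDerivAt (fun ε : ℝ => ∫ x in a..b, ‖f x + ε • g x‖)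
      (∫ x in a..b, ⟪‖f x‖⁻¹ • f x, g x⟫) 0 := by
  have h_meas : AEStronglyMeasurable (fun x => ⟪‖f x‖⁻¹ • f x, g x⟫)
      (volume.restrict (uIoc a b)) := by
    have h_inv : ContinuousOn (fun x => ‖f x‖⁻¹) (uIcc a b) :=
      hf.norm.continuousOn.inv₀ fun x hx => norm_ne_zero_iff.mpr (hf0 x hx)
    exact ((h_inv.smul hf.continuousOn).inner hg.continuousOn).mono uIoc_subset_uIcc
      |>.aestronglyMeasurable measurableSet_uIoc
  have h_lip (x : ℝ) :
      LipschitzOnWith (Real.nnabs ‖g x‖) (fun ε : ℝ => ‖f x + ε • g x‖) (Metric.ball 0 1) := by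
    rw [← coe_nnnorm, Real.nnabs_coe]
    exact (lipschitzWith_norm_add_smul (f x) (g x)).lipschitzOnWith
  exact (intervalIntegral.hasDerivAt_integral_of_dominated_loc_of_lip
    (F := fun ε x => ‖f x + ε • g x‖) (bound := fun x => ‖g x‖)
    (Metric.ball_mem_nhds 0 one_pos)
    (Filter.Eventually.of_forall fun ε => (hf.add (hg.const_smul ε)).norm.aestronglyMeasurable)
    (by simpa using hf.norm.intervalIntegrable a b) h_meas
    (Filter.Eventually.of_forall fun x _ => h_lip x) (hg.norm.intervalIntegrable a b)
    (Filter.Eventually.of_forall fun x hx =>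
      hasDerivAt_norm_add_smul _ _ (hf0 x (uIoc_subset_uIcc hx)))).2

theorem intervalIntegral.integral_inner_deriv_eq_sub {u v u' v' : ℝ → E} {a b : ℝ}
    (hu : ∀ x ∈ uIcc a b, HasDerivAt u (u' x) x) (hv : ∀ x ∈ uIcc a b, HasDerivAt v (v' x) x)
    (hu' : ContinuousOn u' (uIcc a b)) (hv' : ContinuousOn v' (uIcc a b)) :
    ∫ x in a..b, ⟪u x, v' x⟫ = ⟪u b, v b⟫ - ⟪u a, v a⟫ - ∫ x in a..b, ⟪u' x, v x⟫ := by
  have hu_cont : ContinuousOn u (uIcc a b) := fun x hx => (hu x hx).continuousAt.continuousWithinAt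
  have hv_cont : ContinuousOn v (uIcc a b) := fun x hx => (hv x hx).continuousAt.continuousWithinAt
  have h_left : IntervalIntegrable (fun x => ⟪u x, v' x⟫) volume a b :=
    (hu_cont.inner hv').intervalIntegrable
  have h_right : IntervalIntegrable (fun x => ⟪u' x, v x⟫) volume a b :=
    (hu'.inner hv_cont).intervalIntegrable
  have hftc := integral_eq_sub_of_hasDerivAt (fun x hx => (hu x hx).inner ℝ (hv x hx))
    (h_left.add h_right)
  rw [integral_add h_left h_right] at hftc
  linarith

end InnerProductSpace

section Tangent

variable {γ : ℝ → EuclideanSpace ℝ (Fin 2)}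

theorem contDiffAt_tangent (hγ : ContDiff ℝ 2 γ) {x : ℝ} (hx : deriv γ x ≠ 0) :
    ContDiffAt ℝ 1 (tangent γ) x := by
  have hγ' : ContDiffAt ℝ 1 (deriv γ) x := (hγ.iterate_deriv' 1 1).contDiffAt
  exact ((hγ'.norm ℝ hx).inv (norm_ne_zero_iff.mpr hx)).smul hγ'

theorem continuousOn_deriv_tangent (hγ : ContDiff ℝ 2 γ) :
    ContinuousOn (deriv (tangent γ)) {x | deriv γ x ≠ 0} :=
  ContDiffOn.continuousOn_deriv_of_isOpen
    (fun _ hx => (contDiffAt_tangent hγ hx).contDiffWithinAt)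
    (isOpen_ne_fun (hγ.continuous_deriv one_le_two) continuous_const) le_rfl

theorem hasDerivAt_length_variation {Y : ℝ → EuclideanSpace ℝ (Fin 2)} {a b : ℝ}
    (hγ : ContDiff ℝ 2 γ) (hY : ContDiff ℝ 1 Y) (hreg : ∀ x ∈ uIcc a b, deriv γ x ≠ 0) :
    HasDerivAt (fun ε : ℝ => ∫ x in a..b, ‖deriv γ x + ε • deriv Y x‖)
      (⟪tangent γ b, Y b⟫ - ⟪tangent γ a, Y a⟫ - ∫ x in a..b, ⟪deriv (tangent γ) x, Y x⟫) 0 := by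
  have hY' : Continuous (deriv Y) := hY.continuous_deriv le_rfl
  have h_variation := hasDerivAt_intervalIntegral_norm_add_smul
    (hγ.continuous_deriv one_le_two) hY' hreg
  rwa [← intervalIntegral.integral_inner_deriv_eq_sub
    (fun x hx => ((contDiffAt_tangent hγ (hreg x hx)).differentiableAt one_ne_zero).hasDerivAt)
    (fun x _ => (hY.differentiable one_ne_zero x).hasDerivAt)
    ((continuousOn_deriv_tangent hγ).mono hreg) hY'.continuousOn]

end Tangent

theorem stmt7_general (γ₁ γ₂ γ₃ Y₁ Y₂ Y₃ : ℝ → EuclideanSpace ℝ (Fin 2))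
    (hγ₁ : ContDiff ℝ 2 γ₁) (hγ₂ : ContDiff ℝ 2 γ₂) (hγ₃ : ContDiff ℝ 2 γ₃)
    (hreg₁ : ∀ x ∈ Set.Icc (0 : ℝ) 1, deriv γ₁ x ≠ 0)
    (hreg₂ : ∀ x ∈ Set.Icc (0 : ℝ) 1, deriv γ₂ x ≠ 0)
    (hreg₃ : ∀ x ∈ Set.Icc (0 : ℝ) 1, deriv γ₃ x ≠ 0)
    (hregular : tangent γ₁ 0 + tangent γ₂ 0 + tangent γ₃ 0 = 0)
    (hY₁ : ContDiff ℝ 1 Y₁) (hY₂ : ContDiff ℝ 1 Y₂) (hY₃ : ContDiff ℝ 1 Y₃)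
    (hYjunction : Y₁ 0 = Y₂ 0 ∧ Y₂ 0 = Y₃ 0)
    (hYend : Y₁ 1 = 0 ∧ Y₂ 1 = 0 ∧ Y₃ 1 = 0) :
    HasDerivAt
      (fun ε : ℝ =>
        (∫ x in (0 : ℝ)..1, ‖deriv γ₁ x + ε • deriv Y₁ x‖) +
        (∫ x in (0 : ℝ)..1, ‖deriv γ₂ x + ε • deriv Y₂ x‖) +
        (∫ x in (0 : ℝ)..1, ‖deriv γ₃ x + ε • deriv Y₃ x‖))
      (-((∫ x in (0 : ℝ)..1, ⟪deriv (tangent γ₁) x, Y₁ x⟫) +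
         (∫ x in (0 : ℝ)..1, ⟪deriv (tangent γ₂) x, Y₂ x⟫) +
         (∫ x in (0 : ℝ)..1, ⟪deriv (tangent γ₃) x, Y₃ x⟫)))
      0 := by
  rw [← uIcc_of_le zero_le_one] at hreg₁ hreg₂ hreg₃
  have h_sum := ((hasDerivAt_length_variation hγ₁ hY₁ hreg₁).add
    (hasDerivAt_length_variation hγ₂ hY₂ hreg₂)).add (hasDerivAt_length_variation hγ₃ hY₃ hreg₃)
  have h_junction :
      ⟪tangent γ₁ 0, Y₁ 0⟫ + ⟪tangent γ₂ 0, Y₂ 0⟫ + ⟪tangent γ₃ 0, Y₃ 0⟫ = 0 := by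
    rw [← hYjunction.2, ← hYjunction.1, ← inner_add_left, ← inner_add_left, hregular,
      inner_zero_left]
  refine h_sum.congr_deriv ?_
  simp only [hYend, inner_zero_right]
  linarith

/-- **First variation of length at a regular triple junction**: for three regular `C²` curves
meeting at a regular triple junction (`τ¹(0) + τ²(0) + τ³(0) = 0`) and `C¹` variation fields
preserving the junction and fixing the outer endpoints, the boundary terms cancel and the first
variation of the total length equals `−Σᵢ ∫₀¹ ⟨(τⁱ)', Yⁱ⟩ dx`. -/
theorem stmt7 (γ₁ γ₂ γ₃ Y₁ Y₂ Y₃ : ℝ → EuclideanSpace ℝ (Fin 2))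
    (hγ₁ : ContDiff ℝ 2 γ₁) (hγ₂ : ContDiff ℝ 2 γ₂) (hγ₃ : ContDiff ℝ 2 γ₃)
    (hreg₁ : ∀ x ∈ Set.Icc (0 : ℝ) 1, deriv γ₁ x ≠ 0)
    (hreg₂ : ∀ x ∈ Set.Icc (0 : ℝ) 1, deriv γ₂ x ≠ 0)
    (hreg₃ : ∀ x ∈ Set.Icc (0 : ℝ) 1, deriv γ₃ x ≠ 0)
    (hjunction : γ₁ 0 = γ₂ 0 ∧ γ₂ 0 = γ₃ 0)
    (hregular : tangent γ₁ 0 + tangent γ₂ 0 + tangent γ₃ 0 = 0)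
    (hY₁ : ContDiff ℝ 1 Y₁) (hY₂ : ContDiff ℝ 1 Y₂) (hY₃ : ContDiff ℝ 1 Y₃)
    (hYjunction : Y₁ 0 = Y₂ 0 ∧ Y₂ 0 = Y₃ 0)
    (hYend : Y₁ 1 = 0 ∧ Y₂ 1 = 0 ∧ Y₃ 1 = 0) :
    HasDerivAt
      (fun ε : ℝ =>
        (∫ x in (0 : ℝ)..1, ‖deriv γ₁ x + ε • deriv Y₁ x‖) +
        (∫ x in (0 : ℝ)..1, ‖deriv γ₂ x + ε • deriv Y₂ x‖) +
        (∫ x in (0 : ℝ)..1, ‖deriv γ₃ x + ε • deriv Y₃ x‖))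
      (-((∫ x in (0 : ℝ)..1, ⟪deriv (tangent γ₁) x, Y₁ x⟫) +
         (∫ x in (0 : ℝ)..1, ⟪deriv (tangent γ₂) x, Y₂ x⟫) +
         (∫ x in (0 : ℝ)..1, ⟪deriv (tangent γ₃) x, Y₃ x⟫)))
      0 :=
  stmt7_general γ₁ γ₂ γ₃ Y₁ Y₂ Y₃ hγ₁ hγ₂ hγ₃ hreg₁ hreg₂ hreg₃ hregular hY₁ hY₂ hY₃ hYjunction
    hYend
end

section
/- For all real numbers s, t, x, set A = (−1 − s/2, (√3/2)s), B = (1 + t/2, (√3/2)t) and C = (x, √3) in ℝ². Then for every point P ∈ ℝ², ‖P − A‖ + ‖P − B‖ + ‖P − C‖ ≥ 2√3. (Here 2√3 is the total length of the standard triod joining the midpoints (−1,0), (1,0), (0,√3) of the sides of an equilateral triangle to its Fermat point, and A, B, C are arbitrary perturbations of these midpoints along the respective sides.) -/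
lemma norm_sub_vec2 (P : EuclideanSpace ℝ (Fin 2)) (a b : ℝ) :
    ‖P - vec2 a b‖ = Real.sqrt ((P 0 - a) ^ 2 + (P 1 - b) ^ 2) := by
  rw [EuclideanSpace.norm_eq]
  simp [vec2, Fin.sum_univ_two, Real.norm_eq_abs, sq_abs]

lemma key (u v a b : ℝ) (h : u ^ 2 + v ^ 2 = 1) :
    u * a + v * b ≤ Real.sqrt (a ^ 2 + b ^ 2) := by
  have h1 : (0:ℝ) ≤ a ^ 2 + b ^ 2 := by positivity
  have h2 := Real.sq_sqrt h1
  have h3 := Real.sqrt_nonneg (a ^ 2 + b ^ 2)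
  nlinarith [sq_nonneg (u * b - v * a), sq_nonneg (Real.sqrt (a ^ 2 + b ^ 2) - u * a - v * b)]

/-- The length of any cone (topological triod) joining the perturbed midpoints
`A = (−1 − s/2, (√3/2)s)`, `B = (1 + t/2, (√3/2)t)`, `C = (x, √3)` of the sides of an
equilateral triangle to a common point `P` is at least `2√3`, the length of the standard
triod. -/
theorem stmt8 (s t x : ℝ) (P : EuclideanSpace ℝ (Fin 2)) :
    2 * Real.sqrt 3 ≤
      ‖P - vec2 (-1 - s / 2) (Real.sqrt 3 / 2 * s)‖ +
      ‖P - vec2 (1 + t / 2) (Real.sqrt 3 / 2 * t)‖ +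
      ‖P - vec2 x (Real.sqrt 3)‖ := by
  rw [norm_sub_vec2, norm_sub_vec2, norm_sub_vec2]
  set p := P 0
  set q := P 1
  have h3 : Real.sqrt 3 ^ 2 = 3 := Real.sq_sqrt (by norm_num)
  have hA := key (Real.sqrt 3 / 2) (1 / 2) (p - (-1 - s / 2)) (q - Real.sqrt 3 / 2 * s)
    (by nlinarith)
  have hB := key (-(Real.sqrt 3 / 2)) (1 / 2) (p - (1 + t / 2)) (q - Real.sqrt 3 / 2 * t)
    (by nlinarith)
  have hC := key 0 (-1) (p - x) (q - Real.sqrt 3) (by norm_num)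
  nlinarith [hA, hB, hC]
end

section
/- Let U ⊆ ℝ² be open with coordinates (t,x), let v, k : U → ℝ be twice continuously differentiable, let λ, σ : U → ℝ be functions, and assume that on U: v(t,x) ≠ 0, ∂ₓv = v²kσ, ∂ₜv − ∂ₓ²v = −vk² − 2(∂ₓv)²/v + λ∂ₓv, and ∂ₜk − ∂ₓ²k = λ∂ₓk + k³. Then on U one has the identity ∂ₜ(vk) − ∂ₓ²(vk) = (λ − 2vkσ)·∂ₓ(vk). -/
/-! The product rule turns `(∂ₜ - ∂ₓ²)(vk)` into `k(∂ₜ - ∂ₓ²)v + v(∂ₜ - ∂ₓ²)k - 2 ∂ₓv ∂ₓk`.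
Inserting the two evolution equations, the reaction terms `-vk³` and `vk³` cancel, and the
remaining gradient terms `-2k(∂ₓv)²/v - 2 ∂ₓv ∂ₓk` equal `-2 (∂ₓv / v) ∂ₓ(vk) = -2vkσ ∂ₓ(vk)`
by `∂ₓv = v²kσ`. -/

noncomputable def pdt (g : ℝ × ℝ → ℝ) (p : ℝ × ℝ) : ℝ :=
  deriv (fun t => g (t, p.2)) p.1

noncomputable def pdx (g : ℝ × ℝ → ℝ) (p : ℝ × ℝ) : ℝ :=
  deriv (fun x => g (p.1, x)) p.2

theorem deriv_deriv_mul {𝕜 𝔸 : Type*} [NontriviallyNormedField 𝕜] [NormedRing 𝔸]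
    [NormedAlgebra 𝕜 𝔸] {f g : 𝕜 → 𝔸} {x : 𝕜} (hf : ContDiffAt 𝕜 2 f x)
    (hg : ContDiffAt 𝕜 2 g x) :
    deriv (deriv fun y => f y * g y) x
      = deriv (deriv f) x * g x + 2 * (deriv f x * deriv g x) + f x * deriv (deriv g) x := by
  have h := iteratedDeriv_mul (n := 2) hf hg
  simp only [Finset.sum_range_succ, Finset.sum_range_zero, iteratedDeriv_succ,
    iteratedDeriv_zero] at h
  norm_num at h
  rw [← Pi.mul_def, h]
  noncomm_ring

section PartialDerivatives

variable {f g : ℝ × ℝ → ℝ} {p : ℝ × ℝ}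

theorem pdt_mul (hf : DifferentiableAt ℝ f p) (hg : DifferentiableAt ℝ g p) :
    pdt (fun q => f q * g q) p = pdt f p * g p + f p * pdt g p :=
  deriv_fun_mul (hf.comp (f := fun t => (t, p.2)) p.1 (by fun_prop))
    (hg.comp (f := fun t => (t, p.2)) p.1 (by fun_prop))

theorem pdx_mul (hf : DifferentiableAt ℝ f p) (hg : DifferentiableAt ℝ g p) :
    pdx (fun q => f q * g q) p = pdx f p * g p + f p * pdx g p :=
  deriv_fun_mul (hf.comp (f := fun x => (p.1, x)) p.2 (by fun_prop))
    (hg.comp (f := fun x => (p.1, x)) p.2 (by fun_prop))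

theorem pdx_pdx_mul (hf : ContDiffAt ℝ 2 f p) (hg : ContDiffAt ℝ 2 g p) :
    pdx (pdx fun q => f q * g q) p
      = pdx (pdx f) p * g p + 2 * (pdx f p * pdx g p) + f p * pdx (pdx g) p :=
  deriv_deriv_mul (hf.comp (f := fun x => (p.1, x)) p.2 (by fun_prop))
    (hg.comp (f := fun x => (p.1, x)) p.2 (by fun_prop))

end PartialDerivatives

theorem drift_heat_mul_identity {v k vt kt vx kx vxx kxx lam sig : ℝ}
    (hvx : vx = v ^ 2 * k * sig)
    (hveq : vt - vxx = -v * k ^ 2 - 2 * vx ^ 2 / v + lam * vx)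
    (hkeq : kt - kxx = lam * kx + k ^ 3) :
    (vt * k + v * kt) - (vxx * k + 2 * (vx * kx) + v * kxx)
      = (lam - 2 * v * k * sig) * (vx * k + v * kx) := by
  -- `vx² / v = v³k²σ²` also when `v = 0`, where both sides vanish
  have hquot : vx ^ 2 / v = v ^ 3 * k ^ 2 * sig ^ 2 := by
    rcases eq_or_ne v 0 with rfl | hv
    · simp
    · rw [hvx]; field_simp
  linear_combination k * hveq + v * hkeq - 2 * k * hquot + (2 * v * k ^ 2 * sig - 2 * kx) * hvx

theorem stmt11_general (U : Set (ℝ × ℝ)) (hU : IsOpen U) (v k lam sig : ℝ × ℝ → ℝ)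
    (hv : ContDiffOn ℝ 2 v U) (hk : ContDiffOn ℝ 2 k U)
    (hvx : ∀ p ∈ U, pdx v p = (v p) ^ 2 * k p * sig p)
    (hveq : ∀ p ∈ U,
      pdt v p - pdx (pdx v) p = -(v p) * (k p) ^ 2 - 2 * (pdx v p) ^ 2 / v p + lam p * pdx v p)
    (hkeq : ∀ p ∈ U, pdt k p - pdx (pdx k) p = lam p * pdx k p + (k p) ^ 3) :
    ∀ p ∈ U,
      pdt (fun q => v q * k q) p - pdx (pdx (fun q => v q * k q)) p
        = (lam p - 2 * v p * k p * sig p) * pdx (fun q => v q * k q) p := by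
  intro p hp
  have hvp : ContDiffAt ℝ 2 v p := hv.contDiffAt (hU.mem_nhds hp)
  have hkp : ContDiffAt ℝ 2 k p := hk.contDiffAt (hU.mem_nhds hp)
  have hvd := hvp.differentiableAt two_ne_zero
  have hkd := hkp.differentiableAt two_ne_zero
  rw [pdt_mul hvd hkd, pdx_mul hvd hkd, pdx_pdx_mul hvp hkp]
  exact drift_heat_mul_identity (hvx p hp) (hveq p hp) (hkeq p hp)

/-- If `v ≠ 0`, `∂ₓv = v²kσ`, and `v`, `k` satisfy the stated drift heat equations on an open set
`U`, then `vk` satisfies a drift heat equation with no zeroth-order term: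
`∂ₜ(vk) − ∂ₓ²(vk) = (λ − 2vkσ)·∂ₓ(vk)` on `U`. -/
theorem stmt11 (U : Set (ℝ × ℝ)) (hU : IsOpen U) (v k lam sig : ℝ × ℝ → ℝ)
    (hv : ContDiffOn ℝ 2 v U) (hk : ContDiffOn ℝ 2 k U)
    (hv0 : ∀ p ∈ U, v p ≠ 0)
    (hvx : ∀ p ∈ U, pdx v p = (v p) ^ 2 * k p * sig p)
    (hveq : ∀ p ∈ U,
      pdt v p - pdx (pdx v) p = -(v p) * (k p) ^ 2 - 2 * (pdx v p) ^ 2 / v p + lam p * pdx v p)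
    (hkeq : ∀ p ∈ U, pdt k p - pdx (pdx k) p = lam p * pdx k p + (k p) ^ 3) :
    ∀ p ∈ U,
      pdt (fun q => v q * k q) p - pdx (pdx (fun q => v q * k q)) p
        = (lam p - 2 * v p * k p * sig p) * pdx (fun q => v q * k q) p :=
  stmt11_general U hU v k lam sig hv hk hvx hveq hkeq
end

section
/- Let U ⊆ ℝ² be open with coordinates (t,x), let g : U → ℝ be twice continuously differentiable, let b : U → ℝ be a function and A ∈ ℝ, and assume that ∂ₜg − ∂ₓ²g ≤ b·∂ₓg on U. Define f := (max{g − A, 0})². Then at every point (t,x) ∈ U with g(t,x) ≠ A, the function f is differentiable in t and twice differentiable in x, and satisfies ∂ₜf − ∂ₓ²f ≤ (1/2)·b²·f. -/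
open Filter Topology

namespace Filter.EventuallyEq

section Slices

variable {α β γ : Type*} [TopologicalSpace α] [TopologicalSpace β] {f g : α × β → γ} {p : α × β}

theorem slice_fst (h : f =ᶠ[𝓝 p] g) : (fun t => f (t, p.2)) =ᶠ[𝓝 p.1] fun t => g (t, p.2) :=
  h.comp_tendsto (Continuous.tendsto' (by fun_prop) _ _ rfl)

theorem slice_snd (h : f =ᶠ[𝓝 p] g) : (fun x => f (p.1, x)) =ᶠ[𝓝 p.2] fun x => g (p.1, x) :=
  h.comp_tendsto (Continuous.tendsto' (by fun_prop) _ _ rfl)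

end Slices

theorem pdx {f g : ℝ × ℝ → ℝ} {p : ℝ × ℝ} (h : f =ᶠ[𝓝 p] g) : pdx f =ᶠ[𝓝 p] pdx g :=
  h.eventuallyEq_nhds.mono fun _ hq => hq.slice_snd.deriv_eq

end Filter.EventuallyEq

theorem eventuallyEq_max_sub_sq {X : Type*} [TopologicalSpace X] {g : X → ℝ} {p : X} {A : ℝ}
    (hg : ContinuousAt g p) (hne : g p ≠ A) :
    ∃ c : ℝ, (c = 0 ∨ c = 1) ∧ max (g p - A) 0 = c * (g p - A) ∧
      (fun q => max (g q - A) 0 ^ 2) =ᶠ[𝓝 p] fun q => c * (g q - A) ^ 2 := by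
  rcases hne.lt_or_gt with hlt | hgt
  · refine ⟨0, .inl rfl, by simpa using hlt.le, ?_⟩
    filter_upwards [hg.eventually (eventually_lt_nhds hlt)] with q hq
    simp [max_eq_right (sub_nonpos.mpr hq.le)]
  · refine ⟨1, .inr rfl, by simpa using hgt.le, ?_⟩
    filter_upwards [hg.eventually (eventually_gt_nhds hgt)] with q hq
    simp [max_eq_left (sub_nonneg.mpr hq.le)]

section Partials

variable {g : ℝ × ℝ → ℝ} {p : ℝ × ℝ} {U : Set (ℝ × ℝ)}

theorem hasDerivAt_pdt (hg : DifferentiableAt ℝ g p) :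
    HasDerivAt (fun t => g (t, p.2)) (pdt g p) p.1 :=
  (hg.comp p.1 (differentiableAt_id.prodMk (differentiableAt_const _))).hasDerivAt

theorem hasDerivAt_pdx (hg : DifferentiableAt ℝ g p) :
    HasDerivAt (fun x => g (p.1, x)) (pdx g p) p.2 :=
  (hg.comp p.2 ((differentiableAt_const _).prodMk differentiableAt_id)).hasDerivAt

theorem pdx_eq_fderiv_apply (hg : DifferentiableAt ℝ g p) : pdx g p = fderiv ℝ g p (0, 1) :=
  (hg.hasFDerivAt.comp_hasDerivAt p.2 ((hasDerivAt_const _ _).prodMk (hasDerivAt_id _))).deriv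

theorem ContDiffOn.differentiableAt_pdx (hg : ContDiffOn ℝ 2 g U) (hU : IsOpen U) (hp : p ∈ U) :
    DifferentiableAt ℝ (pdx g) p := by
  have hfderiv : DifferentiableAt ℝ (fderiv ℝ g) p :=
    ((hg.fderiv_of_isOpen (m := 1) hU (by norm_num)).differentiableOn one_ne_zero).differentiableAt
      (hU.mem_nhds hp)
  refine (hfderiv.clm_apply (differentiableAt_const (0, 1))).congr_of_eventuallyEq ?_
  filter_upwards [hU.mem_nhds hp] with q hq
  exact pdx_eq_fderiv_apply ((hg.contDiffAt (hU.mem_nhds hq)).differentiableAt two_ne_zero)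

variable (c A : ℝ)

theorem hasDerivAt_pdt_mul_sub_sq (hg : DifferentiableAt ℝ g p) :
    HasDerivAt (fun t => c * (g (t, p.2) - A) ^ 2) (2 * c * (g p - A) * pdt g p) p.1 := by
  exact ((((hasDerivAt_pdt hg).sub_const A).fun_pow 2).const_mul c).congr_deriv (by ring)

theorem hasDerivAt_pdx_mul_sub_sq (hg : DifferentiableAt ℝ g p) :
    HasDerivAt (fun x => c * (g (p.1, x) - A) ^ 2) (2 * c * (g p - A) * pdx g p) p.2 := by
  exact ((((hasDerivAt_pdx hg).sub_const A).fun_pow 2).const_mul c).congr_deriv (by ring)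

theorem hasDerivAt_pdx_pdx_mul_sub_sq (hg : ContDiffOn ℝ 2 g U) (hU : IsOpen U) (hp : p ∈ U) :
    HasDerivAt (fun x => pdx (fun q => c * (g q - A) ^ 2) (p.1, x))
      (2 * c * (pdx g p ^ 2 + (g p - A) * pdx (pdx g) p)) p.2 := by
  have hdiff : ∀ q ∈ U, DifferentiableAt ℝ g q := fun q hq =>
    (hg.contDiffAt (hU.mem_nhds hq)).differentiableAt two_ne_zero
  have hpdx : pdx (fun q => c * (g q - A) ^ 2) =ᶠ[𝓝 p] fun q => 2 * c * (g q - A) * pdx g q := by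
    filter_upwards [hU.mem_nhds hp] with q hq
    exact (hasDerivAt_pdx_mul_sub_sq c A (hdiff q hq)).deriv
  have hprod := (((hasDerivAt_pdx (hdiff p hp)).sub_const A).const_mul (2 * c)).fun_mul
    (hasDerivAt_pdx (hg.differentiableAt_pdx hU hp))
  exact (hprod.congr_of_eventuallyEq hpdx.slice_snd).congr_deriv (by ring)

end Partials

theorem sub_le_half_sq_mul_of_heat_le {c y T D z b : ℝ} (hc : c = 0 ∨ c = 1) (hy : 0 ≤ c * y)
    (h : T - D ≤ b * z) :
    2 * c * y * T - 2 * c * (z ^ 2 + y * D) ≤ 1 / 2 * b ^ 2 * (c * y) ^ 2 := by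
  rcases hc with rfl | rfl
  · simp
  · rw [one_mul] at hy
    nlinarith [sq_nonneg (b * y - 2 * z), mul_le_mul_of_nonneg_left h hy]

/-- If `g` satisfies `∂ₜg − ∂ₓ²g ≤ b·∂ₓg` on an open set `U`, then the squared positive
truncation `f = (max{g − A, 0})²` is, at every point where `g ≠ A`, differentiable in `t` and
twice differentiable in `x`, and satisfies `∂ₜf − ∂ₓ²f ≤ (1/2)·b²·f`. -/
theorem stmt13 (U : Set (ℝ × ℝ)) (hU : IsOpen U) (g b : ℝ × ℝ → ℝ) (A : ℝ)
    (hg : ContDiffOn ℝ 2 g U)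
    (hgineq : ∀ p ∈ U, pdt g p - pdx (pdx g) p ≤ b p * pdx g p) :
    ∀ p ∈ U, g p ≠ A →
      (DifferentiableAt ℝ (fun t => (max (g (t, p.2) - A) 0) ^ 2) p.1 ∧
        DifferentiableAt ℝ (fun x => (max (g (p.1, x) - A) 0) ^ 2) p.2 ∧
        DifferentiableAt ℝ (fun x => pdx (fun q => (max (g q - A) 0) ^ 2) (p.1, x)) p.2) ∧
      pdt (fun q => (max (g q - A) 0) ^ 2) p - pdx (pdx (fun q => (max (g q - A) 0) ^ 2)) p
        ≤ (1 / 2) * (b p) ^ 2 * (max (g p - A) 0) ^ 2 := by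
  intro p hp hne
  have hgp : DifferentiableAt ℝ g p := (hg.contDiffAt (hU.mem_nhds hp)).differentiableAt two_ne_zero
  obtain ⟨c, hc, hmax, hloc⟩ := eventuallyEq_max_sub_sq hgp.continuousAt hne
  have ht := (hasDerivAt_pdt_mul_sub_sq c A hgp).congr_of_eventuallyEq hloc.slice_fst
  have hx := (hasDerivAt_pdx_mul_sub_sq c A hgp).congr_of_eventuallyEq hloc.slice_snd
  have hxx := (hasDerivAt_pdx_pdx_mul_sub_sq c A hg hU hp).congr_of_eventuallyEq hloc.pdx.slice_snd
  refine ⟨⟨ht.differentiableAt, hx.differentiableAt, hxx.differentiableAt⟩, ?_⟩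
  have hpdt : pdt (fun q => max (g q - A) 0 ^ 2) p = _ := ht.deriv
  have hpdxx : pdx (pdx (fun q => max (g q - A) 0 ^ 2)) p = _ := hxx.deriv
  rw [hpdt, hpdxx, hmax]
  exact sub_le_half_sq_mul_of_heat_le hc (hmax ▸ le_max_right _ _) (hgineq p hp)
end

section
/- Evolution of the backward heat kernel along a curve moving by curvature with tangential velocity: Let 0 < t₀ ≤ T, p₀ ∈ ℝ², and define ρ(t,p) := (4π(t₀−t))^{−1/2} exp(−‖p−p₀‖²/(4(t₀−t))) for t < t₀. Let γ : [0,T) × [0,1] → ℝ² be smooth with ∂ₓγ(t,x) ≠ 0 everywhere, evolving by ∂ₜγ = k + λτ for a smooth function λ, where τ = ∂ₓγ/‖∂ₓγ‖, ν = Rτ, ∂ₛ = ‖∂ₓγ‖⁻¹∂ₓ and k = ∂ₛτ. Then for every t ∈ [0,t₀) and x ∈ [0,1]: ∂ₜ(ρ(t,γ(t,x))) = −∂ₛ²(ρ∘γ) + ( −⟨γ−p₀, k⟩/(t₀−t) − ⟨γ−p₀, ν⟩²/(4(t₀−t)²) )·(ρ∘γ) − (λ/(2(t₀−t)))·⟨γ−p₀,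 τ⟩·(ρ∘γ), where (ρ∘γ)(t,x) := ρ(t,γ(t,x)). -/
/-!
Everything follows from one chain-rule formula: along any path `r ↦ (a r, g r)` in space-time,
`ρ(a, g)' = (a'/(2σ) - a'‖g - p₀‖²/(4σ²) - ⟪g - p₀, g'⟫/(2σ)) ρ` with `σ = t₀ - a`.
Taking `a` constant and `g = γ t` gives `∂ₛρ = -⟪γ - p₀, τ⟫ ρ/(2σ)`; differentiating once more,
with `∂ₓτ = ‖∂ₓγ‖ k` and `∂ₓγ = ‖∂ₓγ‖ τ`, gives
`∂ₛ²ρ = (⟪γ - p₀, τ⟫²/(4σ²) - (1 + ⟪γ - p₀, k⟫)/(2σ)) ρ`.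
Taking `a = id` and `g = γ(·, x)` with `∂ₜγ = k + λτ` gives `∂ₜρ`, and the two agree as claimed
once `‖γ - p₀‖²` is split as `⟪γ - p₀, τ⟫² + ⟪γ - p₀, ν⟫²`.
-/

open scoped RealInnerProductSpace

/-- The space derivative `∂ₓγ` of a time-dependent curve. -/
noncomputable def pX (γ : ℝ → ℝ → EuclideanSpace ℝ (Fin 2)) (t x : ℝ) :
    EuclideanSpace ℝ (Fin 2) :=
  deriv (γ t) x

/-- The unit tangent `τ = ∂ₓγ/‖∂ₓγ‖` of a time-dependent curve. -/
noncomputable def utang (γ : ℝ → ℝ → EuclideanSpace ℝ (Fin 2)) (t x : ℝ) :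
    EuclideanSpace ℝ (Fin 2) :=
  ‖pX γ t x‖⁻¹ • pX γ t x

/-- The unit normal `ν = Rτ` of a time-dependent curve. -/
noncomputable def unorm (γ : ℝ → ℝ → EuclideanSpace ℝ (Fin 2)) (t x : ℝ) :
    EuclideanSpace ℝ (Fin 2) :=
  Rot (utang γ t x)

/-- The arclength derivative `∂ₛh = ‖∂ₓγ‖⁻¹ ∂ₓh` of a scalar quantity along a time-dependent
curve. -/
noncomputable def sderiv (γ : ℝ → ℝ → EuclideanSpace ℝ (Fin 2)) (h : ℝ → ℝ → ℝ) (t x : ℝ) : ℝ :=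
  ‖pX γ t x‖⁻¹ * deriv (h t) x

/-- The arclength derivative `∂ₛh = ‖∂ₓγ‖⁻¹ ∂ₓh` of a vector quantity along a time-dependent
curve. -/
noncomputable def sderivV (γ h : ℝ → ℝ → EuclideanSpace ℝ (Fin 2)) (t x : ℝ) :
    EuclideanSpace ℝ (Fin 2) :=
  ‖pX γ t x‖⁻¹ • deriv (h t) x

/-- The curvature vector `k = ∂ₛτ` of a time-dependent curve. -/
noncomputable def curv (γ : ℝ → ℝ → EuclideanSpace ℝ (Fin 2)) (t x : ℝ) :
    EuclideanSpace ℝ (Fin 2) :=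
  sderivV γ (utang γ) t x

/-- The one-dimensional backward heat kernel centered at `(t₀, p₀)`:
`ρ(t,p) = (4π(t₀−t))^{−1/2} exp(−‖p−p₀‖²/(4(t₀−t)))`. -/
noncomputable def backHeat (t₀ : ℝ) (p₀ : EuclideanSpace ℝ (Fin 2)) (t : ℝ)
    (p : EuclideanSpace ℝ (Fin 2)) : ℝ :=
  (Real.sqrt (4 * Real.pi * (t₀ - t)))⁻¹ * Real.exp (-‖p - p₀‖ ^ 2 / (4 * (t₀ - t)))

local notation "ℝ²" => EuclideanSpace ℝ (Fin 2)

theorem inner_sq_add_inner_rot_sq (a v : ℝ²) :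
    ⟪a, v⟫ ^ 2 + ⟪a, Rot v⟫ ^ 2 = ‖a‖ ^ 2 * ‖v‖ ^ 2 := by
  simp only [EuclideanSpace.norm_sq_eq, PiLp.inner_apply, RCLike.inner_apply, conj_trivial,
    Fin.sum_univ_two, Rot, vec2, WithLp.equiv_symm_apply, Matrix.cons_val_zero,
    Matrix.cons_val_one, Real.norm_eq_abs, sq_abs]
  ring

section BackHeat

variable (t₀ : ℝ) (p₀ : ℝ²)

theorem hasDerivAt_backHeat {a : ℝ → ℝ} {g : ℝ → ℝ²} {a' r : ℝ} {g' : ℝ²}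
    (ha : HasDerivAt a a' r) (hg : HasDerivAt g g' r) (hr : a r < t₀) :
    HasDerivAt (fun r => backHeat t₀ p₀ (a r) (g r))
      ((a' / (2 * (t₀ - a r)) - a' * ‖g r - p₀‖ ^ 2 / (4 * (t₀ - a r) ^ 2)
        - ⟪g r - p₀, g'⟫ / (2 * (t₀ - a r))) * backHeat t₀ p₀ (a r) (g r)) r := by
  have hσ : 0 < t₀ - a r := sub_pos.mpr hr
  have hA : 0 < 4 * Real.pi * (t₀ - a r) := by positivity
  have hS : 0 < √(4 * Real.pi * (t₀ - a r)) := Real.sqrt_pos.mpr hA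
  have hS2 : √(4 * Real.pi * (t₀ - a r)) ^ 2 = 4 * Real.pi * (t₀ - a r) := Real.sq_sqrt hA.le
  have hσ' : HasDerivAt (fun r => t₀ - a r) (-a') r := ha.const_sub t₀
  have hpref : HasDerivAt (fun s => (√(4 * Real.pi * (t₀ - a s)))⁻¹) _ r :=
    ((hσ'.const_mul (4 * Real.pi)).sqrt hA.ne').fun_inv hS.ne'
  have hgauss : HasDerivAt (fun s => Real.exp (-‖g s - p₀‖ ^ 2 / (4 * (t₀ - a s)))) _ r :=
    (((hg.sub_const p₀).norm_sq.neg).div (hσ'.const_mul 4) (by positivity)).exp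
  refine (hpref.mul hgauss).congr_deriv ?_
  simp only [backHeat, Pi.div_apply, Pi.neg_apply]
  field_simp
  rw [hS2]
  ring

end BackHeat

section Frame

variable (γ : ℝ → ℝ → ℝ²) (t x : ℝ)

theorem pX_eq_norm_smul_utang : pX γ t x = ‖pX γ t x‖ • utang γ t x := by
  by_cases h : pX γ t x = 0
  · simp [utang, h]
  · rw [utang, smul_smul, mul_inv_cancel₀ (norm_ne_zero_iff.mpr h), one_smul]

theorem norm_utang (h : pX γ t x ≠ 0) : ‖utang γ t x‖ = 1 := by
  rw [utang, norm_smul, norm_inv, norm_norm, inv_mul_cancel₀ (norm_ne_zero_iff.mpr h)]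

theorem deriv_utang (h : pX γ t x ≠ 0) : deriv (utang γ t) x = ‖pX γ t x‖ • curv γ t x := by
  rw [curv, sderivV, smul_smul, mul_inv_cancel₀ (norm_ne_zero_iff.mpr h), one_smul]

theorem differentiableAt_utang (hd : DifferentiableAt ℝ (pX γ t) x) (h : pX γ t x ≠ 0) :
    DifferentiableAt ℝ (utang γ t) x :=
  ((hd.norm ℝ h).inv (norm_ne_zero_iff.mpr h)).smul hd

end Frame

section BackHeatAlongCurve

variable (t₀ : ℝ) (p₀ : ℝ²) {γ : ℝ → ℝ → ℝ²} {t : ℝ}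

theorem sderiv_backHeat_comp (ht : t < t₀) (hγt : Differentiable ℝ (γ t)) :
    sderiv γ (fun s y => backHeat t₀ p₀ s (γ s y)) t
      = fun y => -(⟪γ t y - p₀, utang γ t y⟫ / (2 * (t₀ - t))) * backHeat t₀ p₀ t (γ t y) := by
  funext y
  rw [sderiv, (hasDerivAt_backHeat t₀ p₀ (hasDerivAt_const y t) (hγt y).hasDerivAt ht).deriv,
    utang, real_inner_smul_right, pX]
  ring

theorem sderiv_sderiv_backHeat_comp {x : ℝ} (ht : t < t₀) (hγt : Differentiable ℝ (γ t))
    (hd : DifferentiableAt ℝ (pX γ t) x) (hreg : pX γ t x ≠ 0) :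
    sderiv γ (fun s y => sderiv γ (fun s' y' => backHeat t₀ p₀ s' (γ s' y')) s y) t x
      = (⟪γ t x - p₀, utang γ t x⟫ ^ 2 / (4 * (t₀ - t) ^ 2)
          - (1 + ⟪γ t x - p₀, curv γ t x⟫) / (2 * (t₀ - t))) * backHeat t₀ p₀ t (γ t x) := by
  have hσ : t₀ - t ≠ 0 := (sub_pos.mpr ht).ne'
  have hn : ‖pX γ t x‖ ≠ 0 := norm_ne_zero_iff.mpr hreg
  have hγ' : HasDerivAt (γ t) (pX γ t x) x := (hγt x).hasDerivAt
  have hinner : HasDerivAt (fun y => ⟪γ t y - p₀, utang γ t y⟫)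
      (⟪γ t x - p₀, deriv (utang γ t) x⟫ + ⟪pX γ t x, utang γ t x⟫) x :=
    (hγ'.sub_const p₀).inner ℝ (differentiableAt_utang γ t x hd hreg).hasDerivAt
  have hρ := hasDerivAt_backHeat t₀ p₀ (hasDerivAt_const x t) hγ' ht
  have hρ' : HasDerivAt
      (fun y => -(⟪γ t y - p₀, utang γ t y⟫ / (2 * (t₀ - t))) * backHeat t₀ p₀ t (γ t y)) _ x :=
    (hinner.div_const _).neg.mul hρ
  rw [sderiv, sderiv_backHeat_comp t₀ p₀ ht hγt, hρ'.deriv, deriv_utang γ t x hreg]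
  rw [pX_eq_norm_smul_utang γ t x]
  simp only [Pi.neg_apply, real_inner_smul_left, real_inner_smul_right, real_inner_self_eq_norm_sq,
    norm_smul, norm_norm, norm_utang γ t x hreg, mul_one]
  field_simp
  ring

end BackHeatAlongCurve

theorem stmt14_general (T t₀ : ℝ) (ht₀T : t₀ ≤ T) (p₀ : EuclideanSpace ℝ (Fin 2))
    (γ : ℝ → ℝ → EuclideanSpace ℝ (Fin 2)) (lam : ℝ → ℝ → ℝ)
    (hγ : ContDiff ℝ (⊤ : ℕ∞) (Function.uncurry γ))
    (hreg : ∀ t x : ℝ, pX γ t x ≠ 0)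
    (hflow : ∀ t ∈ Set.Ico (0 : ℝ) T, ∀ x ∈ Set.Icc (0 : ℝ) 1,
      deriv (fun s => γ s x) t = curv γ t x + lam t x • utang γ t x) :
    ∀ t ∈ Set.Ico (0 : ℝ) t₀, ∀ x ∈ Set.Icc (0 : ℝ) 1,
      deriv (fun s => backHeat t₀ p₀ s (γ s x)) t
        = - sderiv γ (fun s y => sderiv γ (fun s' y' => backHeat t₀ p₀ s' (γ s' y')) s y) t x
          + (-(⟪γ t x - p₀, curv γ t x⟫ / (t₀ - t))
                - ⟪γ t x - p₀, unorm γ t x⟫ ^ 2 / (4 * (t₀ - t) ^ 2))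
              * backHeat t₀ p₀ t (γ t x)
          - lam t x / (2 * (t₀ - t)) * ⟪γ t x - p₀, utang γ t x⟫ * backHeat t₀ p₀ t (γ t x) := by
  rintro t ⟨ht0, htt0⟩ x hx
  have hσ : t₀ - t ≠ 0 := (sub_pos.mpr htt0).ne'
  have hγt : ContDiff ℝ (⊤ : ℕ∞) (γ t) := hγ.comp (contDiff_const.prodMk contDiff_id)
  have hpX : DifferentiableAt ℝ (pX γ t) x :=
    ((contDiff_infty_iff_deriv.mp hγt).2.differentiable (by simp)) x
  have hvel : HasDerivAt (fun s => γ s x) (curv γ t x + lam t x • utang γ t x) t := by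
    rw [← hflow t ⟨ht0, htt0.trans_le ht₀T⟩ x hx]
    exact ((hγ.comp (contDiff_id.prodMk contDiff_const)).differentiable (by simp) t).hasDerivAt
  have hpyth := inner_sq_add_inner_rot_sq (γ t x - p₀) (utang γ t x)
  rw [norm_utang γ t x (hreg t x), one_pow, mul_one] at hpyth
  have hρ : HasDerivAt (fun s => backHeat t₀ p₀ s (γ s x)) _ t :=
    hasDerivAt_backHeat t₀ p₀ (hasDerivAt_id' t) hvel htt0
  rw [hρ.deriv,
    sderiv_sderiv_backHeat_comp t₀ p₀ htt0 (hγt.differentiable (by simp)) hpX (hreg t x), unorm,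
    inner_add_right, real_inner_smul_right, ← hpyth]
  field_simp
  ring

/-- **Evolution of the backward heat kernel along a curve moving by curvature with tangential
velocity**: for a smooth regular curve evolving by `∂ₜγ = k + λτ`, and `t ∈ [0,t₀)`, `x ∈ [0,1]`,
`∂ₜ(ρ∘γ) = −∂ₛ²(ρ∘γ) + (−⟨γ−p₀,k⟩/(t₀−t) − ⟨γ−p₀,ν⟩²/(4(t₀−t)²))(ρ∘γ)
 − (λ/(2(t₀−t)))⟨γ−p₀,τ⟩(ρ∘γ)`. -/
theorem stmt14 (T t₀ : ℝ) (ht₀ : 0 < t₀) (ht₀T : t₀ ≤ T) (p₀ : EuclideanSpace ℝ (Fin 2))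
    (γ : ℝ → ℝ → EuclideanSpace ℝ (Fin 2)) (lam : ℝ → ℝ → ℝ)
    (hγ : ContDiff ℝ (⊤ : ℕ∞) (Function.uncurry γ))
    (hlam : ContDiff ℝ (⊤ : ℕ∞) (Function.uncurry lam))
    (hreg : ∀ t x : ℝ, pX γ t x ≠ 0)
    (hflow : ∀ t ∈ Set.Ico (0 : ℝ) T, ∀ x ∈ Set.Icc (0 : ℝ) 1,
      deriv (fun s => γ s x) t = curv γ t x + lam t x • utang γ t x) :
    ∀ t ∈ Set.Ico (0 : ℝ) t₀, ∀ x ∈ Set.Icc (0 : ℝ) 1,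
      deriv (fun s => backHeat t₀ p₀ s (γ s x)) t
        = - sderiv γ (fun s y => sderiv γ (fun s' y' => backHeat t₀ p₀ s' (γ s' y')) s y) t x
          + (-(⟪γ t x - p₀, curv γ t x⟫ / (t₀ - t))
                - ⟪γ t x - p₀, unorm γ t x⟫ ^ 2 / (4 * (t₀ - t) ^ 2))
              * backHeat t₀ p₀ t (γ t x)
          - lam t x / (2 * (t₀ - t)) * ⟪γ t x - p₀, utang γ t x⟫ * backHeat t₀ p₀ t (γ t x) :=
  stmt14_general T t₀ ht₀T p₀ γ lam hγ hreg hflow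
end
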